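/- arXiv:0806.1289 — 2 statements merged into one kernel-verified Lean document; each statement's English description precedes it below -/
import Mathlib

section
/- Let D > 0, R > 0, a > 0, k > 0, 0 < u₀ < 1, and define b₁(T) = D R T/(2 u₀(1-u₀)) - a/2 and β₁(T) = -(π²/L_d²)(π²/L_d² + b₁(T)/k). If 0 < L_d ≤ π·√(2k/a), then β₁(T) < 0 for every temperature T > 0. That is, if the container length is at most the critical length scale L_d^c = π·√(2k/a), then no phase separation occurs at any positive temperature. -/
open Real

/-!
The hypothesis `L_d ≤ π √(2k/a)` says exactly that `π²/L_d² ≥ a/(2k)`, while for `T > 0` the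
entropic term of `b₁(T)` is positive, so `b₁(T)/k > -a/(2k)`. Hence the second factor
`π²/L_d² + b₁(T)/k` of `β₁(T)` is positive and `β₁(T)` is negative.
-/

lemma inv_le_sq_div_sq_of_le_mul_sqrt {c x L : ℝ} (hc : 0 < c) (hL : 0 < L)
    (hLc : L ≤ x * √c) : c⁻¹ ≤ x ^ 2 / L ^ 2 := by
  have hsq : L ^ 2 ≤ x ^ 2 * c := by
    calc L ^ 2 ≤ (x * √c) ^ 2 := pow_le_pow_left₀ hL.le hLc 2
      _ = x ^ 2 * c := by rw [mul_pow, sq_sqrt hc.le]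
  rw [inv_eq_one_div, div_le_div_iff₀ hc (by positivity)]
  linarith

/-- If the container length satisfies `0 < L_d ≤ π√(2k/a)` (the critical
length scale `L_d^c`), then the first eigenvalue
`β₁(T) = -(π²/L_d²)(π²/L_d² + b₁(T)/k)` with `b₁(T) = DRT/(2u₀(1-u₀)) - a/2`
is negative for every temperature `T > 0`: no phase separation occurs. -/
theorem no_phase_separation_below_critical_length
    (D R a k Ld u₀ : ℝ) (hD : 0 < D) (hR : 0 < R) (ha : 0 < a) (hk : 0 < k)
    (hu₀ : u₀ ∈ Set.Ioo (0:ℝ) 1)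
    (b₁ β₁ : ℝ → ℝ)
    (hb₁ : ∀ T, b₁ T = D * R * T / (2 * u₀ * (1 - u₀)) - a / 2)
    (hβ₁ : ∀ T, β₁ T = -(π ^ 2 / Ld ^ 2) * (π ^ 2 / Ld ^ 2 + b₁ T / k))
    (hLd : 0 < Ld) (hLdc : Ld ≤ π * Real.sqrt (2 * k / a)) :
    ∀ T : ℝ, 0 < T → β₁ T < 0 := by
  intro T hT
  obtain ⟨hu₀_pos, hu₀_lt_one⟩ := hu₀
  have hcrit : a / (2 * k) ≤ π ^ 2 / Ld ^ 2 := by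
    simpa using inv_le_sq_div_sq_of_le_mul_sqrt (by positivity) hLd hLdc
  have hb : -(a / 2) < b₁ T := by
    have : 0 < 1 - u₀ := sub_pos.mpr hu₀_lt_one
    have : 0 < D * R * T / (2 * u₀ * (1 - u₀)) := by positivity
    rw [hb₁]
    linarith
  have hbk : -(b₁ T / k) < a / (2 * k) := by
    rw [← neg_div, ← div_div]
    exact div_lt_div_of_pos_right (by linarith) hk
  have hmode : 0 < π ^ 2 / Ld ^ 2 + b₁ T / k := by linarith
  rw [hβ₁, neg_mul]
  exact neg_neg_of_pos (mul_pos (by positivity) hmode)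
end

section
/- Let D > 0, R > 0, T > 0, k > 0 and L_d > 0 be fixed, and define K_d(u₀) = (2L_d²/(9π²))·(b₂(u₀)²/k) - b₃(u₀) for u₀ ∈ (0,1), where b₂(u₀) = D R T (2u₀-1)/(6u₀²(1-u₀)²) and b₃(u₀) = D R T (1-3u₀+3u₀²)/(12u₀³(1-u₀)³). Then there exists δ > 0 such that K_d(u₀) > 0 for all u₀ ∈ (0,δ) and for all u₀ ∈ (1-δ,1). That is, for molar fractions sufficiently close to 0 or 1 the phase separation is first-order with latent heat. -/
/-!
With `A = D R T` and `p = u₀ (1 - u₀)`, one has `(2u₀ - 1)² = 1 - 4p` and `1 - 3u₀ + 3u₀² = 1 - 3p`,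
so `K_d(u₀)` is a function of `p` alone: `A (2 L_d² A (1 - 4p) - 27 π² k p (1 - 3p)) / (324 π² k p⁴)`.
Its numerator tends to `2 L_d² A² > 0` as `p → 0⁺`, and `p → 0⁺` at both endpoints `u₀ → 0⁺`, `u₀ → 1⁻`.
-/

open Real Set Filter Topology

lemma transitionOrder_eq (A k Ld u : ℝ) (hk : k ≠ 0) :
    2 * Ld ^ 2 / (9 * π ^ 2) * ((A * (2 * u - 1) / (6 * u ^ 2 * (1 - u) ^ 2)) ^ 2 / k)
        - A * (1 - 3 * u + 3 * u ^ 2) / (12 * u ^ 3 * (1 - u) ^ 3)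
      = A * (2 * Ld ^ 2 * A * (1 - 4 * (u * (1 - u)))
          - 27 * π ^ 2 * k * (u * (1 - u)) * (1 - 3 * (u * (1 - u))))
        / (324 * π ^ 2 * k * (u * (1 - u)) ^ 4) := by
  rcases eq_or_ne u 0 with rfl | hu0
  · simp
  rcases eq_or_ne u 1 with rfl | hu1
  · simp
  have : 1 - u ≠ 0 := sub_ne_zero.2 hu1.symm
  field_simp
  ring

lemma eventually_transitionOrder_pos {A k Ld : ℝ} (hA : 0 < A) (hk : 0 < k) (hLd : Ld ≠ 0) :
    ∀ᶠ p in 𝓝[>] 0, 0 < A * (2 * Ld ^ 2 * A * (1 - 4 * p) - 27 * π ^ 2 * k * p * (1 - 3 * p))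
        / (324 * π ^ 2 * k * p ^ 4) := by
  have hnum : ∀ᶠ p in 𝓝 0, 0 < 2 * Ld ^ 2 * A * (1 - 4 * p) - 27 * π ^ 2 * k * p * (1 - 3 * p) :=
    Tendsto.eventually_const_lt (by simp; positivity) (Continuous.tendsto (by fun_prop) 0)
  filter_upwards [nhdsWithin_le_nhds hnum, self_mem_nhdsWithin] with p hp (hp0 : 0 < p)
  positivity

lemma exists_near_endpoints_of_eventually {P : ℝ → Prop} (hP : ∀ᶠ p in 𝓝[>] 0, P p) :
    ∃ δ > 0, (∀ u ∈ Ioo 0 δ, P (u * (1 - u))) ∧ (∀ u ∈ Ioo (1 - δ) 1, P (u * (1 - u))) := by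
  obtain ⟨δ, ⟨hδ0, hδ1⟩, hδP⟩ := (mem_nhdsGT_iff_exists_mem_Ioc_Ioo_subset zero_lt_one).1 hP
  refine ⟨δ, hδ0, fun u ⟨hu0, hu⟩ => hδP ⟨?_, ?_⟩, fun u ⟨hu, hu1⟩ => hδP ⟨?_, ?_⟩⟩
  all_goals nlinarith

/-- For fixed `D, R, T, k, L_d > 0`, the Case I transition-order
parameter `K_d(u₀) = (2L_d²/(9π²))(b₂(u₀)²/k) - b₃(u₀)` (with `b₂, b₃` from the
Hildebrand free energy) is positive for all molar fractions `u₀` sufficiently close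
to `0` or to `1`: the separation is first-order with latent heat near the endpoints. -/
theorem first_order_near_endpoints
    (D R T k Ld : ℝ) (hD : 0 < D) (hR : 0 < R) (hT : 0 < T) (hk : 0 < k) (hLd : 0 < Ld)
    (b₂ b₃ Kd : ℝ → ℝ)
    (hb₂ : ∀ u₀, b₂ u₀ = D * R * T * (2 * u₀ - 1) / (6 * u₀ ^ 2 * (1 - u₀) ^ 2))
    (hb₃ : ∀ u₀, b₃ u₀ = D * R * T * (1 - 3 * u₀ + 3 * u₀ ^ 2) / (12 * u₀ ^ 3 * (1 - u₀) ^ 3))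
    (hKd : ∀ u₀, Kd u₀ = 2 * Ld ^ 2 / (9 * π ^ 2) * ((b₂ u₀) ^ 2 / k) - b₃ u₀) :
    ∃ δ > 0, (∀ u₀ ∈ Set.Ioo (0:ℝ) δ, 0 < Kd u₀) ∧
             (∀ u₀ ∈ Set.Ioo (1 - δ) (1:ℝ), 0 < Kd u₀) := by
  simp only [hKd, hb₂, hb₃, transitionOrder_eq _ k Ld _ hk.ne']
  exact exists_near_endpoints_of_eventually
    (eventually_transitionOrder_pos (by positivity) hk hLd.ne')
end
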